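/- arXiv:1102.1516 — 2 statements merged into one kernel-verified Lean document; each statement's English description precedes it below -/
import Mathlib

section
/- In a tensor algebra over a field, modding out a two-sided ideal generated by a suitable quadratic element preserves non-divisibility on the right: if ξ = Σ b_{ij} x_i x_j is homogeneous of odd degree N with b_{ij} ≠ 0 iff b_{ji} ≠ 0, I the two-sided ideal generated by ξ, and u = Σ a_i x_i a nonzero homogeneous element of degree M, then for any w in the tensor algebra, w·u ∈ I if and only if w ∈ I. -/
/-!
Identify `T(V)` with the monoid algebra of the free monoid on the generators and let `∂ₓ` be the
right partial derivative (`f = f(1) + Σₓ (∂ₓ f) x`), which obeys `∂ₓ (f g) = f ∂ₓ g + g(1) ∂ₓ f`.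
As `ξ(1) = 0`, applying `∂ₓ` to `w u = Σ pₜ ξ qₜ` gives `aₓ w ≡ P ∂ₓ ξ (mod I)` for all `x`, where
`P = Σ qₜ(1) pₜ`. Each `∂ₓ ξ = Σᵢ bᵢₓ xᵢ` is a homogeneous linear form, and oddness of `N` yields
a `y` with `a_y = 0` and `∂_y ξ ≠ 0`: otherwise some `bᵢⱼ ≠ 0` would force `aᵢ, aⱼ ≠ 0`, hence
`N = |xᵢ| + |xⱼ| = 2M`. So `P ∂_y ξ ∈ I`. Since `I` is graded by word length, the word-length `n`
component of `aₓ w` is congruent to the length `n - 1` component of `P` times `∂ₓ ξ`, and induction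
on `n`, over all nonzero homogeneous linear forms at once, shows that every component of `w` lies
in `I`.
-/

open MonoidAlgebra Submodule

theorem FreeMonoid.eq_one_or_exists_eq_mul_of {X : Type*} (m : FreeMonoid X) :
    m = 1 ∨ ∃ m' x, m = m' * of x := by
  rcases List.eq_nil_or_concat m.toList with h | ⟨l, x, h⟩
  · exact .inl h
  · exact .inr ⟨ofList l, x, by simpa using congrArg ofList h⟩

theorem FreeMonoid.eq_of_mul_of_eq_mul_of {X : Type*} {m m' : FreeMonoid X} {x y : X}
    (h : m * of x = m' * of y) : x = y := by
  simpa using congrArg (fun m => m.toList.getLast?) h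

theorem exists_eq_zero_and_ne_zero_of_odd {ι M₀ M₁ : Type*} [Zero M₀] [Zero M₁] {deg : ι → ℤ}
    {N M : ℤ} (hN : Odd N) {b : ι → ι → M₀} (hsymm : ∀ i j, b i j ≠ 0 → b j i ≠ 0)
    (hbdeg : ∀ i j, b i j ≠ 0 → deg i + deg j = N) {i j : ι} (hij : b i j ≠ 0) {a : ι → M₁}
    (hadeg : ∀ i, a i ≠ 0 → deg i = M) : ∃ y, a y = 0 ∧ ∃ x, b x y ≠ 0 := by
  by_contra! h
  have hi : a i ≠ 0 := fun hi => hsymm i j hij (h i hi j)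
  have hj : a j ≠ 0 := fun hj => hij (h j hj i)
  have hN' := hbdeg i j hij
  rw [hadeg i hi, hadeg j hj] at hN'
  exact Int.not_even_iff_odd.mpr hN ⟨M, hN'.symm⟩

namespace Submodule
variable {R A B : Type*} [CommSemiring R] [Semiring A] [Algebra R A] [Semiring B] [Algebra R B]

variable (R) in
def twoSidedSpan (ξ : A) : Submodule R A := span R {x | ∃ v w, x = v * ξ * w}

theorem mul_mem_twoSidedSpan (v w ξ : A) : v * ξ * w ∈ twoSidedSpan R ξ :=
  subset_span ⟨v, w, rfl⟩

theorem mul_mem_twoSidedSpan_right {ξ x : A} (hx : x ∈ twoSidedSpan R ξ) (y : A) :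
    x * y ∈ twoSidedSpan R ξ := by
  induction hx using span_induction with
  | mem x hx =>
    obtain ⟨v, w, rfl⟩ := hx
    simpa only [mul_assoc] using mul_mem_twoSidedSpan v (w * y) ξ
  | zero => simp
  | add x x' _ _ hx hx' => simpa only [add_mul] using add_mem hx hx'
  | smul c x _ hx => simpa only [smul_mul_assoc] using smul_mem _ c hx

theorem map_twoSidedSpan (e : A ≃ₐ[R] B) (ξ : A) :
    (twoSidedSpan R ξ).map e.toLinearMap = twoSidedSpan R (e ξ) := by
  rw [twoSidedSpan, map_span]
  congr 1
  ext x
  constructor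
  · rintro ⟨_, ⟨v, w, rfl⟩, rfl⟩
    exact ⟨e v, e w, by simp⟩
  · rintro ⟨v, w, rfl⟩
    exact ⟨e.symm v * ξ * e.symm w, ⟨_, _, rfl⟩, by simp⟩

theorem mem_twoSidedSpan_iff_map (e : A ≃ₐ[R] B) {ξ x : A} :
    x ∈ twoSidedSpan R ξ ↔ e x ∈ twoSidedSpan R (e ξ) := by
  rw [← map_twoSidedSpan e]
  exact ⟨mem_map_of_mem, fun ⟨y, hy, hxy⟩ => e.injective hxy ▸ hy⟩

end Submodule

namespace MonoidAlgebra
variable {R X : Type*}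

section RightDeriv
variable [Semiring R]

noncomputable def rightDeriv (x : X) : R[FreeMonoid X] →ₗ[R] R[FreeMonoid X] where
  toFun f := ofCoeff (f.coeff.comapDomain (· * .of x) (mul_left_injective _).injOn)
  map_add' _ _ := by ext; simp
  map_smul' _ _ := by ext; simp

@[simp]
theorem coeff_rightDeriv (x : X) (f : R[FreeMonoid X]) (m : FreeMonoid X) :
    (rightDeriv x f).coeff m = f.coeff (m * .of x) := by
  simp [rightDeriv]

theorem rightDeriv_mul_of [DecidableEq X] (x y : X) (f : R[FreeMonoid X]) :
    rightDeriv x (f * single (.of y) 1) = if y = x then f else 0 := by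
  ext m
  split_ifs with h
  · subst h
    rw [coeff_rightDeriv, coeff_mul_single_eq_coeff_mul m (fun _ _ => mul_left_inj _), mul_one]
  · exact coeff_mul_single_of_forall_mul_ne _ _ fun _ hm =>
      h (FreeMonoid.eq_of_mul_of_eq_mul_of hm)

theorem rightDeriv_single_one (x : X) (r : R) :
    rightDeriv x (single (1 : FreeMonoid X) r) = 0 := by
  ext m
  simp [coeff_single]

end RightDeriv

theorem rightDeriv_mul [CommSemiring R] (x : X) (f g : R[FreeMonoid X]) :
    rightDeriv x (f * g) = f * rightDeriv x g + g.coeff 1 • rightDeriv x f := by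
  classical
  induction g using induction_linear with
  | zero => simp
  | add g₁ g₂ h₁ h₂ =>
    simp only [mul_add, map_add, h₁, h₂, coeff_add, Finsupp.add_apply, add_smul]
    abel
  | single m r =>
    rcases m.eq_one_or_exists_eq_mul_of with rfl | ⟨m, y, rfl⟩
    · ext m
      simp [coeff_mul_single_one, rightDeriv_single_one, mul_comm]
    · have hm : single (m * .of y) r = single m r * single (.of y) 1 := by simp
      rw [hm, ← mul_assoc, rightDeriv_mul_of, rightDeriv_mul_of]
      simp [coeff_single]

section LengthGrading
variable [Semiring R]

variable (R) in
def lengthGrade (n : ℕ) : Submodule R R[FreeMonoid X] where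
  carrier := {f | ∀ m ∈ f.coeff.support, m.length = n}
  add_mem' {f g} hf hg m hm := by
    classical
    rcases Finset.mem_union.mp (Finsupp.support_add hm) with h | h
    exacts [hf m h, hg m h]
  zero_mem' m hm := by simp at hm
  smul_mem' r f hf m hm := hf m (Finsupp.support_smul hm)

theorem single_mem_lengthGrade (m : FreeMonoid X) (r : R) :
    single m r ∈ lengthGrade R m.length := by
  classical
  intro m' hm'
  rw [Finset.mem_singleton.mp (Finsupp.support_single_subset hm')]

theorem mul_mem_lengthGrade {a b : ℕ} {f g : R[FreeMonoid X]} (hf : f ∈ lengthGrade R a)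
    (hg : g ∈ lengthGrade R b) : f * g ∈ lengthGrade R (a + b) := by
  classical
  intro m hm
  obtain ⟨m₁, h₁, m₂, h₂, rfl⟩ := Finset.mem_mul.mp (support_coeff_mul_subset f g hm)
  rw [FreeMonoid.length_mul, hf m₁ h₁, hg m₂ h₂]

theorem coeff_one_eq_zero_of_mem_lengthGrade {n : ℕ} {f : R[FreeMonoid X]}
    (hf : f ∈ lengthGrade R (n + 1)) : f.coeff 1 = 0 :=
  Finsupp.notMem_support_iff.mp fun h => by simpa using hf 1 h

theorem rightDeriv_mem_lengthGrade (x : X) {n : ℕ} {f : R[FreeMonoid X]}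
    (hf : f ∈ lengthGrade R (n + 1)) : rightDeriv x f ∈ lengthGrade R n := by
  intro m hm
  have := hf _ (by simpa using hm)
  rw [FreeMonoid.length_mul, FreeMonoid.length_of] at this
  omega

theorem rightDeriv_of_mem_lengthGrade_one (x : X) {u : R[FreeMonoid X]}
    (hu : u ∈ lengthGrade R 1) : rightDeriv x u = u.coeff (.of x) • 1 := by
  ext m
  rcases eq_or_ne m 1 with rfl | hm
  · simp [one_def]
  · have : u.coeff (m * .of x) = 0 := Finsupp.notMem_support_iff.mp fun h => by
      simpa [FreeMonoid.length_eq_zero, hm] using hu _ h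
    simp [one_def, coeff_single, hm.symm, this]

theorem exists_coeff_of_ne_zero_of_mem_lengthGrade_one {u : R[FreeMonoid X]}
    (hu : u ∈ lengthGrade R 1) (hu0 : u ≠ 0) : ∃ x, u.coeff (.of x) ≠ 0 := by
  obtain ⟨m, hm⟩ := Finsupp.support_nonempty_iff.mpr (coeff_injective.ne hu0)
  obtain ⟨x, rfl⟩ := FreeMonoid.length_eq_one.mp (hu m hm)
  exact ⟨x, Finsupp.mem_support_iff.mp hm⟩

noncomputable def lengthProj (n : ℕ) : R[FreeMonoid X] →ₗ[R] R[FreeMonoid X] where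
  toFun f := ofCoeff (f.coeff.filter (·.length = n))
  map_add' _ _ := by ext; simp [Finsupp.filter_add]
  map_smul' _ _ := by ext; simp [Finsupp.filter_smul]

theorem coeff_lengthProj (n : ℕ) (f : R[FreeMonoid X]) (m : FreeMonoid X) :
    (lengthProj n f).coeff m = if m.length = n then f.coeff m else 0 := by
  simp [lengthProj, Finsupp.filter_apply]

theorem lengthProj_mem_lengthGrade (n : ℕ) (f : R[FreeMonoid X]) :
    lengthProj n f ∈ lengthGrade R n := by
  intro m hm
  by_contra h
  simp [coeff_lengthProj, h] at hm

theorem lengthProj_of_mem {a : ℕ} {f : R[FreeMonoid X]} (hf : f ∈ lengthGrade R a) (n : ℕ) :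
    lengthProj n f = if a = n then f else 0 := by
  ext m
  rw [coeff_lengthProj]
  by_cases hm : f.coeff m = 0
  · split_ifs <;> simp [hm]
  · rw [hf m (Finsupp.mem_support_iff.mpr hm)]
    split_ifs <;> simp

theorem sum_lengthProj {f : R[FreeMonoid X]} {S : Finset ℕ}
    (hS : f.coeff.support.image FreeMonoid.length ⊆ S) : ∑ n ∈ S, lengthProj n f = f := by
  ext m
  simp only [coeff_sum, Finsupp.finsetSum_apply, coeff_lengthProj, Finset.sum_ite_eq]
  by_cases hm : f.coeff m = 0
  · simp [hm]
  · simp [hS (Finset.mem_image_of_mem _ (Finsupp.mem_support_iff.mpr hm))]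

theorem lengthProj_add_mul_of_mem {b : ℕ} (n : ℕ) (f : R[FreeMonoid X]) {g : R[FreeMonoid X]}
    (hg : g ∈ lengthGrade R b) : lengthProj (n + b) (f * g) = lengthProj n f * g := by
  classical
  conv_lhs => rw [← sum_lengthProj (Finset.subset_insert n (f.coeff.support.image _)),
    Finset.sum_mul, map_sum]
  simp only [lengthProj_of_mem (mul_mem_lengthGrade (lengthProj_mem_lengthGrade _ f) hg),
    add_left_inj, Finset.sum_ite_eq', Finset.mem_insert_self, if_true]

theorem lengthProj_mul_of_mem_of_lt {b n : ℕ} (f : R[FreeMonoid X]) {g : R[FreeMonoid X]}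
    (hg : g ∈ lengthGrade R b) (hn : n < b) : lengthProj n (f * g) = 0 := by
  classical
  conv_lhs => rw [← sum_lengthProj (subset_refl (f.coeff.support.image _)),
    Finset.sum_mul, map_sum]
  refine Finset.sum_eq_zero fun a _ => ?_
  rw [lengthProj_of_mem (mul_mem_lengthGrade (lengthProj_mem_lengthGrade _ f) hg),
    if_neg (by omega)]

end LengthGrading

theorem lengthProj_mem_twoSidedSpan [CommSemiring R] {d : ℕ} {ξ y : R[FreeMonoid X]}
    (hξ : ξ ∈ lengthGrade R d) (hy : y ∈ twoSidedSpan R ξ) (n : ℕ) :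
    lengthProj n y ∈ twoSidedSpan R ξ := by
  classical
  induction hy using span_induction with
  | mem y hy =>
    obtain ⟨p, q, rfl⟩ := hy
    rw [← sum_lengthProj (subset_refl (p.coeff.support.image FreeMonoid.length)),
      ← sum_lengthProj (subset_refl (q.coeff.support.image FreeMonoid.length)),
      Finset.sum_mul, Finset.sum_mul, map_sum]
    refine sum_mem fun a _ => ?_
    rw [Finset.mul_sum, map_sum]
    refine sum_mem fun c _ => ?_
    rw [lengthProj_of_mem (mul_mem_lengthGrade (mul_mem_lengthGrade
      (lengthProj_mem_lengthGrade a p) hξ) (lengthProj_mem_lengthGrade c q))]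
    split_ifs
    exacts [mul_mem_twoSidedSpan _ _ ξ, zero_mem _]
  | zero => simp
  | add y y' _ _ hy hy' => simpa only [map_add] using add_mem hy hy'
  | smul c y _ hy => simpa only [map_smul] using smul_mem _ c hy

theorem exists_rightDeriv_sub_mul_mem_twoSidedSpan [CommRing R] {ξ y : R[FreeMonoid X]}
    (hξ : ξ.coeff 1 = 0) (hy : y ∈ twoSidedSpan R ξ) :
    ∃ P, ∀ x, rightDeriv x y - P * rightDeriv x ξ ∈ twoSidedSpan R ξ := by
  induction hy using span_induction with
  | mem y hy =>
    obtain ⟨p, q, rfl⟩ := hy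
    refine ⟨q.coeff 1 • p, fun x => ?_⟩
    have : rightDeriv x (p * ξ * q) - q.coeff 1 • p * rightDeriv x ξ
        = p * ξ * rightDeriv x q := by
      simp [rightDeriv_mul, hξ]
    rw [this]
    exact mul_mem_twoSidedSpan _ _ ξ
  | zero => exact ⟨0, fun x => by simp⟩
  | add y y' _ _ hy hy' =>
    obtain ⟨P, hP⟩ := hy
    obtain ⟨P', hP'⟩ := hy'
    refine ⟨P + P', fun x => ?_⟩
    convert add_mem (hP x) (hP' x) using 1
    rw [map_add, add_mul]
    abel
  | smul c y _ hy =>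
    obtain ⟨P, hP⟩ := hy
    refine ⟨c • P, fun x => ?_⟩
    simpa only [map_smul, smul_mul_assoc, ← smul_sub] using smul_mem _ c (hP x)

section Cancellation
variable {F : Type*} [Field F] {ξ : F[FreeMonoid X]} {U : Set F[FreeMonoid X]}

theorem lengthProj_mem_twoSidedSpan_of_mul_mem (hξ : ξ ∈ lengthGrade F 2)
    (hU : ∀ u ∈ U, u ∈ lengthGrade F 1) (hU0 : 0 ∉ U)
    (hsucc : ∀ u ∈ U, ∃ x, u.coeff (.of x) = 0 ∧ rightDeriv x ξ ∈ U)
    (n : ℕ) {u w : F[FreeMonoid X]} (hu : u ∈ U) (hw : w * u ∈ twoSidedSpan F ξ) :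
    lengthProj n w ∈ twoSidedSpan F ξ := by
  induction n using Nat.strong_induction_on generalizing u w with | _ n ih =>
  obtain ⟨x₀, hx₀⟩ :=
    exists_coeff_of_ne_zero_of_mem_lengthGrade_one (hU u hu) (ne_of_mem_of_not_mem hu hU0)
  obtain ⟨y, hy, hyU⟩ := hsucc u hu
  obtain ⟨P, hP⟩ :=
    exists_rightDeriv_sub_mul_mem_twoSidedSpan (coeff_one_eq_zero_of_mem_lengthGrade hξ) hw
  have hD : ∀ x, rightDeriv x (w * u) = u.coeff (.of x) • w := fun x => by
    simp [rightDeriv_mul, rightDeriv_of_mem_lengthGrade_one x (hU u hu),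
      coeff_one_eq_zero_of_mem_lengthGrade (hU u hu)]
  have hPy : P * rightDeriv y ξ ∈ twoSidedSpan F ξ := by
    simpa [hD, hy] using hP y
  have hPx₀ : lengthProj n (P * rightDeriv x₀ ξ) ∈ twoSidedSpan F ξ := by
    have hξ₀ := rightDeriv_mem_lengthGrade x₀ hξ
    rcases n with _ | d
    · rw [lengthProj_mul_of_mem_of_lt P hξ₀ one_pos]
      exact zero_mem _
    · rw [lengthProj_add_mul_of_mem d P hξ₀]
      exact mul_mem_twoSidedSpan_right (ih d d.lt_succ_self hyU hPy) _
  have := add_mem (lengthProj_mem_twoSidedSpan hξ (hP x₀) n) hPx₀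
  rw [← map_add, sub_add_cancel, hD, map_smul] at this
  exact (smul_mem_iff _ hx₀).mp this

theorem mem_twoSidedSpan_of_mul_mem (hξ : ξ ∈ lengthGrade F 2)
    (hU : ∀ u ∈ U, u ∈ lengthGrade F 1) (hU0 : 0 ∉ U)
    (hsucc : ∀ u ∈ U, ∃ x, u.coeff (.of x) = 0 ∧ rightDeriv x ξ ∈ U)
    {u w : F[FreeMonoid X]} (hu : u ∈ U) (hw : w * u ∈ twoSidedSpan F ξ) :
    w ∈ twoSidedSpan F ξ := by
  classical
  rw [← sum_lengthProj (subset_refl (w.coeff.support.image FreeMonoid.length))]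
  exact sum_mem fun n _ => lengthProj_mem_twoSidedSpan_of_mul_mem hξ hU hU0 hsucc n hu hw

end Cancellation

section LinearForms
variable [Semiring R] [Fintype X]

theorem sum_smul_single_mem_lengthGrade_one (a : X → R) :
    ∑ i, a i • single (FreeMonoid.of i) (1 : R) ∈ lengthGrade R 1 :=
  sum_mem fun _ _ => smul_mem _ _ (single_mem_lengthGrade _ _)

theorem coeff_sum_smul_single_of (a : X → R) (x : X) :
    (∑ i, a i • single (FreeMonoid.of i) (1 : R)).coeff (.of x) = a x := by
  classical
  simp [coeff_single, Finsupp.single_apply, FreeMonoid.of_injective.eq_iff]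

theorem sum_sum_smul_single_mul_mem_lengthGrade_two (b : X → X → R) :
    ∑ i, ∑ j, b i j • (single (FreeMonoid.of i) (1 : R) * single (FreeMonoid.of j) 1) ∈
      lengthGrade R 2 :=
  sum_mem fun _ _ => sum_mem fun _ _ => smul_mem _ _
    (mul_mem_lengthGrade (single_mem_lengthGrade _ _) (single_mem_lengthGrade _ _))

theorem rightDeriv_sum_sum_smul_single_mul (b : X → X → R) (y : X) :
    rightDeriv y
        (∑ i, ∑ j, b i j • (single (FreeMonoid.of i) (1 : R) * single (FreeMonoid.of j) 1)) =
      ∑ i, b i y • single (FreeMonoid.of i) 1 := by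
  classical
  simp only [map_sum, map_smul, rightDeriv_mul_of, smul_ite, smul_zero, Finset.sum_ite_eq',
    Finset.mem_univ, if_true]

end LinearForms

def homogeneousLinearForms [Semiring R] (deg : X → ℤ) : Set R[FreeMonoid X] :=
  {u | u ∈ lengthGrade R 1 ∧ u ≠ 0 ∧ ∃ M, ∀ x, u.coeff (.of x) ≠ 0 → deg x = M}

theorem exists_coeff_eq_zero_and_rightDeriv_mem_homogeneousLinearForms [Semiring R]
    [Fintype X] {deg : X → ℤ} {N : ℤ} (hN : Odd N) {b : X → X → R}
    (hsymm : ∀ i j, b i j ≠ 0 → b j i ≠ 0) (hbdeg : ∀ i j, b i j ≠ 0 → deg i + deg j = N)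
    (hb : ∃ i j, b i j ≠ 0) {u : R[FreeMonoid X]} (hu : u ∈ homogeneousLinearForms deg) :
    ∃ y, u.coeff (.of y) = 0 ∧ rightDeriv y
      (∑ i, ∑ j, b i j • (single (FreeMonoid.of i) (1 : R) * single (FreeMonoid.of j) 1)) ∈
        homogeneousLinearForms deg := by
  obtain ⟨-, -, M, hM⟩ := hu
  obtain ⟨i, j, hij⟩ := hb
  obtain ⟨y, hy, x, hxy⟩ := exists_eq_zero_and_ne_zero_of_odd hN hsymm hbdeg hij hM
  refine ⟨y, hy, ?_⟩
  rw [rightDeriv_sum_sum_smul_single_mul]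
  refine ⟨sum_smul_single_mem_lengthGrade_one _, fun h => hxy ?_, N - deg y, fun m hm => ?_⟩
  · rw [← coeff_sum_smul_single_of (b · y) x, h, coeff_zero, Finsupp.coe_zero, Pi.zero_apply]
  · rw [coeff_sum_smul_single_of] at hm
    linarith [hbdeg m y hm]

theorem mem_twoSidedSpan_of_mul_sum_smul_single_mem {F : Type*} [Field F] [Fintype X]
    {deg : X → ℤ} {N M : ℤ} (hN : Odd N) {b : X → X → F}
    (hsymm : ∀ i j, b i j ≠ 0 → b j i ≠ 0) (hbdeg : ∀ i j, b i j ≠ 0 → deg i + deg j = N)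
    (hb : ∃ i j, b i j ≠ 0) {a : X → F} (hadeg : ∀ i, a i ≠ 0 → deg i = M)
    (ha : ∃ i, a i ≠ 0) {w : F[FreeMonoid X]}
    (hw : w * ∑ i, a i • single (FreeMonoid.of i) 1 ∈ twoSidedSpan F
      (∑ i, ∑ j, b i j • (single (FreeMonoid.of i) (1 : F) * single (FreeMonoid.of j) 1))) :
    w ∈ twoSidedSpan F
      (∑ i, ∑ j, b i j • (single (FreeMonoid.of i) (1 : F) * single (FreeMonoid.of j) 1)) := by
  obtain ⟨i, hi⟩ := ha
  refine mem_twoSidedSpan_of_mul_mem (sum_sum_smul_single_mul_mem_lengthGrade_two b)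
    (U := homogeneousLinearForms deg) (fun _ hu => hu.1) (fun h => h.2.1 rfl)
    (fun _ => exists_coeff_eq_zero_and_rightDeriv_mem_homogeneousLinearForms hN hsymm hbdeg hb)
    ⟨sum_smul_single_mem_lengthGrade_one a, fun h => hi ?_, M, ?_⟩ hw
  · rw [← coeff_sum_smul_single_of a i, h, coeff_zero, Finsupp.coe_zero, Pi.zero_apply]
  · exact fun x hx => hadeg x (by rwa [coeff_sum_smul_single_of] at hx)

end MonoidAlgebra

/-- Lemma LADJ: in the tensor algebra `T(V)` on homogeneous generators `x_1, …, x_k`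
(realized as the free algebra on `Fin k` with a degree function `deg`), let
`ξ = Σ_{|x_i|+|x_j|=N} b_{ij} x_i x_j` be a nonzero element of odd degree `N` with
`b i j ≠ 0 ↔ b j i ≠ 0`, let `I` be the two-sided ideal generated by `ξ` (the span of
all `a * ξ * c`), and let `u = Σ_{|x_i|=M} a_i x_i` be nonzero. Then for any `w`,
`w * u ∈ I ↔ w ∈ I`. -/
theorem right_multiplication_preserves_ideal_membership
    (F : Type*) [Field F] (k : ℕ)
    (deg : Fin k → ℤ) (N : ℤ) (hN : Odd N) (M : ℤ)
    (b : Fin k → Fin k → F)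
    (hsupp : ∀ i j, b i j ≠ 0 ↔ b j i ≠ 0)
    (hbdeg : ∀ i j, b i j ≠ 0 → deg i + deg j = N)
    (a : Fin k → F)
    (hadeg : ∀ i, a i ≠ 0 → deg i = M)
    (ξ u : FreeAlgebra F (Fin k))
    (hξ : ξ = ∑ i : Fin k, ∑ j : Fin k, b i j • (FreeAlgebra.ι F i * FreeAlgebra.ι F j))
    (hξne : ξ ≠ 0)
    (hu : u = ∑ i : Fin k, a i • FreeAlgebra.ι F i)
    (hune : u ≠ 0)
    (I : Submodule F (FreeAlgebra F (Fin k)))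
    (hI : I = Submodule.span F {x | ∃ v w : FreeAlgebra F (Fin k), x = v * ξ * w})
    (w : FreeAlgebra F (Fin k)) :
    w * u ∈ I ↔ w ∈ I := by
  have hb : ∃ i j, b i j ≠ 0 := by
    by_contra! h
    exact hξne (by simp [hξ, h])
  have ha : ∃ i, a i ≠ 0 := by
    by_contra! h
    exact hune (by simp [hu, h])
  let e := FreeAlgebra.equivMonoidAlgebraFreeMonoid (R := F) (X := Fin k)
  have hι : ∀ i, e (FreeAlgebra.ι F i) = single (FreeMonoid.of i) 1 := fun i => by
    simp [e, FreeAlgebra.equivMonoidAlgebraFreeMonoid]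
  subst hI
  change w * u ∈ twoSidedSpan F ξ ↔ w ∈ twoSidedSpan F ξ
  rw [mem_twoSidedSpan_iff_map e, mem_twoSidedSpan_iff_map e (x := w), map_mul, hξ, hu]
  simp only [map_sum, map_smul, map_mul, hι]
  exact ⟨mem_twoSidedSpan_of_mul_sum_smul_single_mem hN (fun i j => (hsupp i j).mp) hbdeg hb
    hadeg ha, fun h => mul_mem_twoSidedSpan_right h _⟩
end

section
/- If β is a family of operations with β_r(y_i) = x_i for i ≤ k₁ and β_r(y_i) = 0 for all r when i > k₁, then applying Σ_t β_{s_t} (over the distinct values s_1<…<s_l of the r_i) to Σ_{i,j} a_{ij}[u_i, v_j] yields Σ_{j≤k₁, i} a_{ij}[u_i, u_j]; in the case n even, vanishing of this sum in the free algebra implies the matrix (a_{ij})_{i,j≤k₁} is symmetric and a_{ij} = 0 for i > k₁, j ≤ k₁ (Proposition P1, even case). -/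
/-!
Expanding `β` by the Leibniz rule turns `β(Σ a_{ij}[u_i, v_j])` into `Σ_{j<k₁} a_{ij}[u_i, u_j]`.
In the free algebra, the coefficient of the word `u_i u_j` in a sum `Σ c_{ij}[u_i, u_j]` is
`c_{ij} - c_{ji}`, so its vanishing makes `c_{ij} = [j < k₁] a_{ij}` symmetric.
-/

section Commutator

variable {R A : Type*} [CommRing R] [Ring A] [Algebra R A] {I : Type*} [Fintype I]

theorem LinearMap.map_sum_smul_commutator_of_leibniz (β : A →ₗ[R] A) (u v : I → A)
    (hLeib₁ : ∀ i j, β (u i * v j) = u i * β (v j))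
    (hLeib₂ : ∀ i j, β (v j * u i) = β (v j) * u i) (a : I → I → R) :
    β (∑ i, ∑ j, a i j • (u i * v j - v j * u i)) =
      ∑ i, ∑ j, a i j • (u i * β (v j) - β (v j) * u i) := by
  simp only [map_sum, map_smul, map_sub, hLeib₁, hLeib₂]

end Commutator

namespace FreeAlgebra

variable {R X : Type*} [CommRing R]

noncomputable def wordCoeff (w : FreeMonoid X) : FreeAlgebra R X →ₗ[R] R :=
  Finsupp.lapply w ∘ₗ (MonoidAlgebra.coeffLinearEquiv R).toLinearMap ∘ₗ
    (equivMonoidAlgebraFreeMonoid (R := R) (X := X)).toLinearMap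

theorem wordCoeff_ι_mul_ι [DecidableEq X] (a b x y : X) :
    wordCoeff (FreeMonoid.of a * FreeMonoid.of b) (ι R x * ι R y) =
      if x = a ∧ y = b then 1 else 0 := by
  classical
  have hword : FreeMonoid.of x * FreeMonoid.of y = FreeMonoid.of a * FreeMonoid.of b ↔
      x = a ∧ y = b := by
    rw [← FreeMonoid.toList.injective.eq_iff]
    simp [FreeMonoid.toList_mul, FreeMonoid.toList_of]
  simp [wordCoeff, equivMonoidAlgebraFreeMonoid, MonoidAlgebra.single_mul_single,
    Finsupp.single_apply, hword]

theorem eq_swap_of_sum_smul_commutator_eq_zero {I : Type*} [Fintype I] {x : I → X}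
    (hx : Function.Injective x) (c : I → I → R)
    (h : ∑ i, ∑ j, c i j • (ι R (x i) * ι R (x j) - ι R (x j) * ι R (x i)) = 0) (i₀ j₀ : I) :
    c i₀ j₀ = c j₀ i₀ := by
  classical
  have hcoeff := congrArg (wordCoeff (FreeMonoid.of (x i₀) * FreeMonoid.of (x j₀))) h
  simpa [wordCoeff_ι_mul_ι, hx.eq_iff, mul_sub, Finset.sum_sub_distrib, ite_and, sub_eq_zero]
    using hcoeff

end FreeAlgebra

theorem bockstein_forces_symmetry_general
    (p : ℕ)
    (k k₁ : ℕ)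
    (β : FreeAlgebra (ZMod p) (Fin k ⊕ Fin k) →ₗ[ZMod p] FreeAlgebra (ZMod p) (Fin k ⊕ Fin k))
    (u v : Fin k → FreeAlgebra (ZMod p) (Fin k ⊕ Fin k))
    (hu : ∀ i, u i = FreeAlgebra.ι (ZMod p) (Sum.inl i))
    (hβv : ∀ j : Fin k, β (v j) = if (j : ℕ) < k₁ then u j else 0)
    (hLeib₁ : ∀ i j, β (u i * v j) = u i * β (v j))
    (hLeib₂ : ∀ i j, β (v j * u i) = β (v j) * u i)
    (a : Fin k → Fin k → ZMod p)
    (hzero : β (∑ i : Fin k, ∑ j : Fin k, a i j • (u i * v j - v j * u i)) = 0) :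
    (∑ i : Fin k, ∑ j : Fin k,
        (if (j : ℕ) < k₁ then a i j • (u i * u j - u j * u i) else 0)) = 0 ∧
    (∀ i j : Fin k, (i : ℕ) < k₁ → (j : ℕ) < k₁ → a i j = a j i) ∧
    (∀ i j : Fin k, k₁ ≤ (i : ℕ) → (j : ℕ) < k₁ → a i j = 0) := by
  have hsum : (∑ i : Fin k, ∑ j : Fin k,
      (if (j : ℕ) < k₁ then a i j • (u i * u j - u j * u i) else 0)) = 0 := by
    rw [β.map_sum_smul_commutator_of_leibniz u v hLeib₁ hLeib₂] at hzero
    convert hzero using 4 with i - j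
    split_ifs with hj <;> simp [hβv, hj]
  set c : Fin k → Fin k → ZMod p := fun i j => if (j : ℕ) < k₁ then a i j else 0
  have hsymm : ∀ i j, c i j = c j i :=
    FreeAlgebra.eq_swap_of_sum_smul_commutator_eq_zero Sum.inl_injective c <| by
      simpa only [c, ite_smul, zero_smul, hu] using hsum
  refine ⟨hsum, fun i j hi hj => ?_, fun i j hi hj => ?_⟩
  · simpa [c, hi, hj] using hsymm i j
  · simpa [c, hj, not_lt.2 hi] using hsymm i j

/-- Derivation property forces symmetry constraints (Proposition P1, even case).
Work in the free algebra on generators `u_1,…,u_k` (degree `n-2`, even) and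
`v_1,…,v_k` (degree `n-1`, odd), over a field of odd characteristic `p`. Let `β` be a
linear map behaving as a graded derivation of degree `-1` with `β(u_i) = 0`,
`β(v_i) = u_i` for `i < k₁` and `β(v_i) = 0` for `i ≥ k₁`; the graded Leibniz rule
(with the relevant signs: `|u_i|` even, `|v_j|` odd, `β(u_i)=0`) gives
`β(u_i v_j) = u_i β(v_j)` and `β(v_j u_i) = β(v_j) u_i`, and `[u_i,v_j] = u_iv_j - v_ju_i`.
If `β(Σ a_{ij}[u_i, v_j]) = 0` then `Σ_{j<k₁} a_{ij}[u_i,u_j] = 0`, and hence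
`a_{ij} = a_{ji}` for `i,j < k₁` and `a_{ij} = 0` for `i ≥ k₁`, `j < k₁`. -/
theorem bockstein_forces_symmetry
    (p : ℕ) [Fact p.Prime] (hodd : Odd p)
    (n k k₁ : ℕ) (hn : Even n) (hk₁ : k₁ ≤ k)
    (β : FreeAlgebra (ZMod p) (Fin k ⊕ Fin k) →ₗ[ZMod p] FreeAlgebra (ZMod p) (Fin k ⊕ Fin k))
    (u v : Fin k → FreeAlgebra (ZMod p) (Fin k ⊕ Fin k))
    (hu : ∀ i, u i = FreeAlgebra.ι (ZMod p) (Sum.inl i))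
    (hv : ∀ i, v i = FreeAlgebra.ι (ZMod p) (Sum.inr i))
    (hβu : ∀ i, β (u i) = 0)
    (hβv : ∀ j : Fin k, β (v j) = if (j : ℕ) < k₁ then u j else 0)
    (hLeib₁ : ∀ i j, β (u i * v j) = u i * β (v j))
    (hLeib₂ : ∀ i j, β (v j * u i) = β (v j) * u i)
    (a : Fin k → Fin k → ZMod p)
    (hzero : β (∑ i : Fin k, ∑ j : Fin k, a i j • (u i * v j - v j * u i)) = 0) :
    (∑ i : Fin k, ∑ j : Fin k,
        (if (j : ℕ) < k₁ then a i j • (u i * u j - u j * u i) else 0)) = 0 ∧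
    (∀ i j : Fin k, (i : ℕ) < k₁ → (j : ℕ) < k₁ → a i j = a j i) ∧
    (∀ i j : Fin k, k₁ ≤ (i : ℕ) → (j : ℕ) < k₁ → a i j = 0) :=
  bockstein_forces_symmetry_general p k k₁ β u v hu hβv hLeib₁ hLeib₂ a hzero
end
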